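/- arXiv:2110.05579 — 2 statements merged into one kernel-verified Lean document; each statement's English description precedes it below -/
import Mathlib

section
/- Let T ≥ 1, let α be a real number with |α| ≤ 1, let G(α) = (I_T − αW)⁻¹W where W is the T×T shift matrix, and let Σ be a real T×T matrix. Then |tr(G(α)·Σ)| ≤ Σ_{t=1}^{T} Σ_{τ≠t} |Σ_{t,τ}|, the sum of absolute values of the off-diagonal entries of Σ. -/
/-!
`I - αW` is inverted by the upper triangular Toeplitz matrix `R` with entries `α^(s-t)`, so
`G(α) = RW` is strictly upper triangular with entries `α^(s-t-1)`. Hence `G` has zero diagonal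
and, for `|α| ≤ 1`, entries of absolute value at most `1`; writing
`tr(GΣ) = ∑_t ∑_{τ≠t} Σ_{tτ} G_{τt}` gives the bound.
-/

open Matrix Finset

/-- The `T×T` real shift matrix `W`, with ones directly above the main diagonal and zeros
elsewhere. -/
noncomputable def shiftMatrix (T : ℕ) : Matrix (Fin T) (Fin T) ℝ :=
  Matrix.of fun t s => if (s : ℕ) = (t : ℕ) + 1 then 1 else 0

theorem abs_trace_mul_le_sum_abs_offdiag {n R : Type*} [Fintype n] [DecidableEq n] [CommRing R]
    [LinearOrder R] [IsStrictOrderedRing R] (G S : Matrix n n R) (hdiag : ∀ t, G t t = 0)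
    (hle : ∀ t s, |G t s| ≤ 1) :
    |trace (G * S)| ≤ ∑ t, ∑ τ ∈ univ.erase t, |S t τ| := by
  have htrace : trace (G * S) = ∑ t, ∑ τ ∈ univ.erase t, S t τ * G τ t := by
    rw [trace_mul_comm]
    exact sum_congr rfl fun t _ => (sum_erase _ (by simp [hdiag])).symm
  calc |trace (G * S)| ≤ ∑ t, ∑ τ ∈ univ.erase t, |S t τ * G τ t| := by
        rw [htrace]
        exact (abs_sum_le_sum_abs _ _).trans (sum_le_sum fun t _ => abs_sum_le_sum_abs _ _)
    _ ≤ ∑ t, ∑ τ ∈ univ.erase t, |S t τ| := by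
        refine sum_le_sum fun t _ => sum_le_sum fun τ _ => ?_
        rw [abs_mul]
        exact mul_le_of_le_one_right (abs_nonneg _) (hle τ t)

theorem shiftMatrix_mul_apply {T : ℕ} {n : Type*} (M : Matrix (Fin T) n ℝ) (t : Fin T) (s : n) :
    (shiftMatrix T * M) t s = if h : (t : ℕ) + 1 < T then M ⟨t + 1, h⟩ s else 0 := by
  rw [mul_apply]
  split_ifs with h
  · rw [sum_eq_single ⟨t + 1, h⟩] <;> simp +contextual [shiftMatrix, Fin.ext_iff]
  · refine sum_eq_zero fun j _ => ?_
    rw [shiftMatrix, of_apply, if_neg (by omega), zero_mul]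

theorem mul_shiftMatrix_apply {T : ℕ} {m : Type*} (M : Matrix m (Fin T) ℝ) (t : m) (s : Fin T) :
    (M * shiftMatrix T) t s = if h : 0 < (s : ℕ) then M t ⟨s - 1, by omega⟩ else 0 := by
  rw [mul_apply]
  split_ifs with h
  · rw [sum_eq_single ⟨s - 1, by omega⟩]
    · rw [shiftMatrix, of_apply, if_pos (by dsimp only; omega), mul_one]
    · intro j _ hj
      rw [shiftMatrix, of_apply, if_neg fun h' => hj (Fin.ext (by dsimp only; omega)), mul_zero]
    · simp
  · refine sum_eq_zero fun j _ => ?_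
    rw [shiftMatrix, of_apply, if_neg (by omega), mul_zero]

noncomputable def shiftResolvent (T : ℕ) (α : ℝ) : Matrix (Fin T) (Fin T) ℝ :=
  Matrix.of fun t s => if t ≤ s then α ^ ((s : ℕ) - t) else 0

theorem shiftMatrix_mul_shiftResolvent_apply (T : ℕ) (α : ℝ) (t s : Fin T) :
    (shiftMatrix T * shiftResolvent T α) t s = if t < s then α ^ ((s : ℕ) - t - 1) else 0 := by
  rw [shiftMatrix_mul_apply]
  simp only [shiftResolvent, of_apply, Fin.le_def, Fin.lt_def]
  split_ifs <;> first | omega | rw [Nat.sub_add_eq] | rfl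

theorem shiftResolvent_mul_shiftMatrix_apply (T : ℕ) (α : ℝ) (t s : Fin T) :
    (shiftResolvent T α * shiftMatrix T) t s = if t < s then α ^ ((s : ℕ) - t - 1) else 0 := by
  rw [mul_shiftMatrix_apply]
  simp only [shiftResolvent, of_apply, Fin.le_def, Fin.lt_def]
  split_ifs <;> first | omega | rw [Nat.sub_right_comm] | rfl

theorem one_sub_smul_shiftMatrix_mul_shiftResolvent (T : ℕ) (α : ℝ) :
    (1 - α • shiftMatrix T) * shiftResolvent T α = 1 := by
  ext t s
  rw [sub_mul, smul_mul, one_mul, Matrix.sub_apply, Matrix.smul_apply,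
    shiftMatrix_mul_shiftResolvent_apply, one_apply, smul_eq_mul]
  simp only [shiftResolvent, of_apply]
  rcases lt_trichotomy t s with hlt | rfl | hgt
  · rw [if_pos hlt.le, if_pos hlt, if_neg hlt.ne, ← pow_succ', Nat.sub_add_cancel, sub_self]
    exact Nat.sub_pos_of_lt hlt
  · simp
  · simp [hgt.not_ge, hgt.not_gt, hgt.ne']

theorem abs_trace_G_mul_le_offdiag_general (T : ℕ) (α : ℝ) (hα : |α| ≤ 1)
    (S : Matrix (Fin T) (Fin T) ℝ) :
    |Matrix.trace ((1 - α • shiftMatrix T)⁻¹ * shiftMatrix T * S)| ≤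
      ∑ t : Fin T, ∑ τ ∈ Finset.univ.erase t, |S t τ| := by
  rw [Matrix.inv_eq_right_inv (one_sub_smul_shiftMatrix_mul_shiftResolvent T α)]
  refine abs_trace_mul_le_sum_abs_offdiag _ S (fun t => ?_) (fun t s => ?_)
  · simp [shiftResolvent_mul_shiftMatrix_apply]
  · rw [shiftResolvent_mul_shiftMatrix_apply]
    split_ifs
    · rw [abs_pow]
      exact pow_le_one₀ (abs_nonneg α) hα
    · simp

/-- For `|α| ≤ 1` and any real `T×T` matrix `S`, `|tr (G(α) S)|` is bounded by the sum of
the absolute values of the off-diagonal entries of `S`, where `G(α) = (I - α W)⁻¹ W`. -/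
theorem abs_trace_G_mul_le_offdiag (T : ℕ) (hT : 1 ≤ T) (α : ℝ) (hα : |α| ≤ 1)
    (S : Matrix (Fin T) (Fin T) ℝ) :
    |Matrix.trace ((1 - α • shiftMatrix T)⁻¹ * shiftMatrix T * S)| ≤
      ∑ t : Fin T, ∑ τ ∈ Finset.univ.erase t, |S t τ| :=
  abs_trace_G_mul_le_offdiag_general T α hα S
end

section
/- Let T ≥ 1, let α be real with α ≠ 1, let G(α) = (I_T − αW)⁻¹W where W is the T×T shift matrix, and let ι_T denote the T×1 vector of ones. Then tr(G(α)·ι_T ι_Tᵀ) = Σ_{t=1}^{T−1} Σ_{τ=1}^{t} α^{τ−1}, and hence, with P_{ι} := (1/T)·ι_T ι_Tᵀ the orthogonal projection onto the span of ι_T, tr(G(α)·P_{ι}) = (1/(1−α)) · (1 − (1/T)·(1−α^T)/(1−α)). -/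
open Matrix Finset

/-- The `T×T` all-ones matrix `ι_T ι_Tᵀ`. -/
noncomputable def onesMatrix (T : ℕ) : Matrix (Fin T) (Fin T) ℝ :=
  Matrix.of fun _ _ => (1 : ℝ)

theorem Fin.sum_univ_ite_val_eq {R : Type*} [AddCommMonoidWithOne R] (T n : ℕ) :
    (∑ i : Fin T, if (i : ℕ) = n then (1 : R) else 0) = if n < T then 1 else 0 := by
  rw [Fin.sum_univ_eq_sum_range (fun i => if i = n then (1 : R) else 0)]
  simp only [sum_ite_eq', mem_range]

theorem shiftMatrix_pow_apply (T k : ℕ) (t s : Fin T) :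
    (shiftMatrix T ^ k) t s = if (s : ℕ) = t + k then 1 else 0 := by
  induction k generalizing s with
  | zero => simp [one_apply, Fin.val_inj, eq_comm]
  | succ k ih =>
    simp only [pow_succ, mul_apply, ih]
    simp only [shiftMatrix, of_apply, ite_mul, one_mul, zero_mul]
    rw [Fin.sum_univ_eq_sum_range (fun j => if j = t + k then
      (if (s : ℕ) = j + 1 then (1 : ℝ) else 0) else 0)]
    simp only [sum_ite_eq', mem_range]
    by_cases h : (t : ℕ) + k < T
    · rw [if_pos h, add_assoc]
    · rw [if_neg h, if_neg (by omega)]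

theorem shiftMatrix_pow_self (T : ℕ) : shiftMatrix T ^ T = 0 := by
  ext t s
  rw [shiftMatrix_pow_apply, if_neg (by omega), Matrix.zero_apply]

theorem trace_mul_onesMatrix {T : ℕ} (A : Matrix (Fin T) (Fin T) ℝ) :
    trace (A * onesMatrix T) = ∑ t, ∑ s, A t s := by
  simp [trace, mul_apply, onesMatrix]

theorem trace_shiftMatrix_pow_mul_onesMatrix (T k : ℕ) :
    trace (shiftMatrix T ^ k * onesMatrix T) = (T - k : ℕ) := by
  simp only [trace_mul_onesMatrix, shiftMatrix_pow_apply, Fin.sum_univ_ite_val_eq]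
  rw [Fin.sum_univ_eq_sum_range (fun t => if t + k < T then (1 : ℝ) else 0), sum_boole,
    ← card_range (T - k)]
  congr 3
  ext t
  simp only [mem_filter, mem_range]
  omega

theorem Matrix.inv_one_sub_eq_geom_sum {n R : Type*} [Fintype n] [DecidableEq n] [CommRing R]
    {A : Matrix n n R} {m : ℕ} (hA : A ^ m = 0) : (1 - A)⁻¹ = ∑ k ∈ range m, A ^ k :=
  inv_eq_right_inv <| by rw [mul_neg_geom_sum, hA, sub_zero]

theorem trace_inv_one_sub_smul_shiftMatrix_mul_shiftMatrix_mul_onesMatrix (T : ℕ) (α : ℝ) :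
    trace ((1 - α • shiftMatrix T)⁻¹ * shiftMatrix T * onesMatrix T) =
      ∑ k ∈ range T, ((T - (k + 1) : ℕ) : ℝ) * α ^ k := by
  have hW : (α • shiftMatrix T) ^ T = 0 := by rw [smul_pow, shiftMatrix_pow_self, smul_zero]
  rw [inv_one_sub_eq_geom_sum hW, sum_mul, sum_mul, trace_sum]
  refine sum_congr rfl fun k _ => ?_
  rw [smul_pow, smul_mul, smul_mul, trace_smul, ← pow_succ,
    trace_shiftMatrix_pow_mul_onesMatrix, smul_eq_mul, mul_comm]

theorem sum_range_geom_sum_eq {R : Type*} [CommSemiring R] (x : R) (n : ℕ) :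
    ∑ t ∈ range n, ∑ τ ∈ range (t + 1), x ^ τ = ∑ τ ∈ range n, ((n - τ : ℕ) : R) * x ^ τ := by
  have := sum_Ico_Ico_comm 0 n fun τ _ => x ^ τ
  simp only [← range_eq_Ico, sum_const, Nat.card_Ico, nsmul_eq_mul] at this
  exact this.symm

theorem one_sub_mul_sum_range_geom_sum {R : Type*} [CommRing R] (x : R) (n : ℕ) :
    (1 - x) * ∑ t ∈ range n, ∑ τ ∈ range (t + 1), x ^ τ = (n + 1) - ∑ τ ∈ range (n + 1), x ^ τ := by
  induction n with
  | zero => simp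
  | succ n ih =>
    rw [sum_range_succ, mul_add, ih, mul_neg_geom_sum, sum_range_succ (n := n + 1)]
    push_cast
    ring

/-- With `G(α) = (I - α W)⁻¹ W` and `ι_T` the vector of ones:
`tr (G(α) ι_T ι_Tᵀ) = ∑_{t=1}^{T-1} ∑_{τ=1}^{t} α^(τ-1)`, and hence with
`P_ι = (1/T) ι_T ι_Tᵀ`,
`tr (G(α) P_ι) = (1/(1-α)) (1 - (1/T)(1-α^T)/(1-α))` (Nickell bias formula). -/
theorem trace_G_mul_ones (T : ℕ) (hT : 1 ≤ T) (α : ℝ) (hα : α ≠ 1) :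
    (Matrix.trace ((1 - α • shiftMatrix T)⁻¹ * shiftMatrix T * onesMatrix T) =
      ∑ t ∈ Finset.range (T - 1), ∑ τ ∈ Finset.range (t + 1), α ^ τ) ∧
    (Matrix.trace ((1 - α • shiftMatrix T)⁻¹ * shiftMatrix T *
        ((1 / (T : ℝ)) • onesMatrix T)) =
      (1 / (1 - α)) * (1 - (1 / (T : ℝ)) * ((1 - α ^ T) / (1 - α)))) := by
  obtain ⟨n, rfl⟩ : ∃ n, T = n + 1 := ⟨T - 1, by omega⟩
  have htrace : trace ((1 - α • shiftMatrix (n + 1))⁻¹ * shiftMatrix (n + 1) * onesMatrix (n + 1))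
      = ∑ t ∈ range n, ∑ τ ∈ range (t + 1), α ^ τ := by
    rw [trace_inv_one_sub_smul_shiftMatrix_mul_shiftMatrix_mul_onesMatrix, sum_range_succ,
      sum_range_geom_sum_eq]
    simp
  refine ⟨htrace, ?_⟩
  have hα' : 1 - α ≠ 0 := sub_ne_zero.mpr hα.symm
  have hgeom := mul_neg_geom_sum α (n + 1)
  have hsum := one_sub_mul_sum_range_geom_sum α n
  rw [Matrix.mul_smul, trace_smul, htrace, smul_eq_mul, ← hgeom]
  push_cast at hsum ⊢
  field_simp
  linear_combination hsum
end
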